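/- arXiv:1811.09692 — 2 statements merged into one kernel-verified Lean document; each statement's English description precedes it below -/
import Mathlib

section
/- Let v be a continuous 1-periodic real-valued function on ℝ whose smallest period is 1, with ∫₀¹ v(θ) dθ = 0. Suppose there exist real numbers a, b, E such that v(θ) + v(aθ + b) = E for all θ ∈ ℝ. Then a = 1 or a = -1, and E = 0. -/
/-!
Substituting `θ + c` into the identity shows that the periods of `v` are stable under
multiplication and division by `a`. As `1` is the smallest period, every period is an integer,
so `a` and `1 / a` are both integers and `a = ±1`. Integrating the identity over `[0, 1]`, both
terms then have mean zero, hence `E = 0`.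
-/

open Function

theorem Function.Periodic.exists_int_eq_of_minimal {α : Type*} {f : ℝ → α}
    (hper : Periodic f 1) (hmin : ∀ p : ℝ, 0 < p → p ≤ 1 → Periodic f p → p = 1)
    {q : ℝ} (hq : Periodic f q) : ∃ n : ℤ, q = n := by
  have hfract : Periodic f (Int.fract q) := by
    simpa [Int.self_sub_floor] using hq.sub_period (hper.int_mul ⌊q⌋)
  have hzero : Int.fract q = 0 := by
    by_contra hne
    exact (Int.fract_lt_one q).ne
      (hmin _ ((Int.fract_nonneg q).lt_of_ne' hne) (Int.fract_lt_one q).le hfract)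
  obtain ⟨n, hn⟩ := Int.fract_eq_zero_iff.mp hzero
  exact ⟨n, hn.symm⟩

theorem Function.Periodic.intervalIntegral_comp_int_mul_add {E : Type*} [NormedAddCommGroup E]
    [NormedSpace ℝ E] {f : ℝ → E} {T : ℝ} (hf : Periodic f T)
    (h_int : ∀ t₁ t₂, IntervalIntegrable f MeasureTheory.volume t₁ t₂) {n : ℤ} (hn : n ≠ 0)
    (b : ℝ) : ∫ x in 0..T, f (n * x + b) = ∫ x in 0..T, f x := by
  have hn' : (n : ℝ) ≠ 0 := Int.cast_ne_zero.mpr hn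
  rw [intervalIntegral.integral_comp_mul_add _ hn', mul_zero, zero_add, add_comm, ← zsmul_eq_mul,
    hf.intervalIntegral_add_zsmul_eq n b h_int, ← Int.cast_smul_eq_zsmul ℝ, inv_smul_smul₀ hn',
    hf.intervalIntegral_add_eq b 0, zero_add]

section AffineFunctionalEquation

variable {K G : Type*} [Field K] [AddGroup G] {v : K → G} {a b c : K} {E : G}

theorem periodic_mul_of_add_comp_affine_eq (hid : ∀ θ, v θ + v (a * θ + b) = E) (ha : a ≠ 0)
    (hc : Periodic v c) : Periodic v (a * c) := by
  intro x
  obtain ⟨θ, rfl⟩ : ∃ θ, a * θ + b = x := ⟨(x - b) / a, by field_simp; ring⟩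
  have h := (hid (θ + c)).trans (hid θ).symm
  rwa [hc, add_right_inj, show a * (θ + c) + b = a * θ + b + a * c by ring] at h

theorem periodic_div_of_add_comp_affine_eq (hid : ∀ θ, v θ + v (a * θ + b) = E) (ha : a ≠ 0)
    (hc : Periodic v c) : Periodic v (c / a) := by
  intro x
  have h := (hid (x + c / a)).trans (hid x).symm
  rwa [show a * (x + c / a) + b = a * x + b + c by field_simp; ring, hc, add_left_inj] at h

end AffineFunctionalEquation

/-- If `v` is continuous, 1-periodic with smallest period 1 and zero mean, and
`v θ + v (a θ + b) = E` for all `θ`, then `a = ±1` and `E = 0`. -/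
theorem stmt_0 (v : ℝ → ℝ) (hcont : Continuous v)
    (hper : Function.Periodic v 1)
    (hmin : ∀ p : ℝ, 0 < p → p ≤ 1 → Function.Periodic v p → p = 1)
    (hmean : ∫ θ in (0:ℝ)..1, v θ = 0)
    (a b E : ℝ) (hid : ∀ θ : ℝ, v θ + v (a * θ + b) = E) :
    (a = 1 ∨ a = -1) ∧ E = 0 := by
  have ha : a ≠ 0 := by
    rintro rfl
    have hconst : ∀ x, v x = E - v b := fun x => eq_sub_of_add_eq (by simpa using hid x)
    have hhalf := hmin (1 / 2) (by norm_num) (by norm_num) fun x => by rw [hconst, hconst x]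
    norm_num at hhalf
  obtain ⟨n, rfl⟩ := hper.exists_int_eq_of_minimal hmin
    (by simpa using periodic_mul_of_add_comp_affine_eq hid ha hper)
  obtain ⟨m, hm⟩ := hper.exists_int_eq_of_minimal hmin
    (periodic_div_of_add_comp_affine_eq hid ha hper)
  have hnm : (n : ℝ) * m = 1 := by rw [← hm]; field_simp
  have hn : n = 1 ∨ n = -1 := Int.eq_one_or_neg_one_of_mul_eq_one (by exact_mod_cast hnm : n * m = 1)
  refine ⟨by rcases hn with rfl | rfl <;> simp, ?_⟩
  have h_int : ∀ t₁ t₂, IntervalIntegrable v MeasureTheory.volume t₁ t₂ :=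
    fun _ _ => hcont.intervalIntegrable _ _
  calc E = ∫ θ in (0:ℝ)..1, (v θ + v (n * θ + b)) := by simp [hid]
    _ = (∫ θ in (0:ℝ)..1, v θ) + ∫ θ in (0:ℝ)..1, v (n * θ + b) :=
        intervalIntegral.integral_add (h_int 0 1) ((by fun_prop : Continuous fun θ : ℝ =>
          v (n * θ + b)).intervalIntegrable _ _)
    _ = 0 := by
        rw [hper.intervalIntegral_comp_int_mul_add h_int (by rintro rfl; simp at ha), hmean,
          add_zero]
end

section
/- Let w : 𝕋² → ℝ be real analytic and non-constant on every straight line segment in 𝕋². Then there exist constants C, α > 0 (depending on w and a compact energy interval J) such that for every unit line segment L ⊂ ℝ², every E ∈ J, and every δ > 0, the 1-dimensional Lebesgue measure of { (θ₁,θ₂) ∈ L : |w(θ₁,θ₂) - E| ≤ δ } is at most C·δ^α. -/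
/-
Along a line, `g t = w (p + t • u)` is real analytic and non-constant, so at every `t` some
derivative `g^(k+1) t` is non-zero. These derivatives depend continuously on `(p, u, t)`, and by
periodicity `(p, u)` ranges over the compact set `[0,1]² × S¹`; compactness then gives finitely
many boxes in `(p, u, t)`, each carrying a fixed order `k ≤ n` and a lower bound
`c ≤ |g^(k+1)|` on a `t`-interval. On such an interval van der Corput's sublevel estimate
`|{|g| ≤ δ}| ≤ 3^(k+1) (δ/c)^(2^(-k))` holds, by induction on `k`: the set where
`|g^(k)| ≤ √(δc)` is short because `|g^(k+1)| ≥ c`, and its complement consists of two intervals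
(`g^(k)` is monotone) on which `|g^(k)| ≥ √(δc)`, so that the induction hypothesis applies.
-/

open Set MeasureTheory Filter Topology
open scoped ContDiff

theorem iteratedDeriv_succ_sub_const {𝕜 F : Type*} [NontriviallyNormedField 𝕜]
    [NormedAddCommGroup F] [NormedSpace 𝕜 F] (f : 𝕜 → F) (c : F) (n : ℕ) :
    iteratedDeriv (n + 1) (fun x => f x - c) = iteratedDeriv (n + 1) f := by
  rw [iteratedDeriv_succ', iteratedDeriv_succ']
  congr 1
  funext x
  exact deriv_sub_const c

section Sublevel

variable {g : ℝ → ℝ} {s : Set ℝ} {c δ : ℝ}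

theorem mul_abs_sub_le_abs_sub_of_le_abs_deriv (hg : Differentiable ℝ g) (hs : s.OrdConnected)
    (hderiv : ∀ t ∈ s, c ≤ |deriv g t|) {x y : ℝ} (hx : x ∈ s) (hy : y ∈ s) :
    c * |x - y| ≤ |g x - g y| := by
  wlog hxy : x < y generalizing x y
  · rcases (not_lt.1 hxy).eq_or_lt with rfl | hyx
    · simp
    · simpa only [abs_sub_comm] using this hy hx hyx
  obtain ⟨ξ, hξ, hslope⟩ := exists_deriv_eq_slope g hxy hg.continuous.continuousOn
    hg.differentiableOn
  have hc := hderiv ξ (hs.out hx hy (Ioo_subset_Icc_self hξ))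
  rw [hslope, abs_div, le_div_iff₀ (abs_pos.2 (sub_ne_zero.2 hxy.ne'))] at hc
  simpa only [abs_sub_comm] using hc

theorem volume_sublevel_le_of_le_abs_deriv (hg : Differentiable ℝ g) (hs : s.OrdConnected)
    (hc : 0 < c) (hderiv : ∀ t ∈ s, c ≤ |deriv g t|) :
    volume {t ∈ s | |g t| ≤ δ} ≤ ENNReal.ofReal (2 * δ / c) := by
  refine (Real.volume_le_diam _).trans (Metric.ediam_le fun x hx y hy => ?_)
  rw [edist_dist, Real.dist_eq]
  refine ENNReal.ofReal_le_ofReal ((le_div_iff₀' hc).2 ?_)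
  calc c * |x - y| ≤ |g x - g y| :=
        mul_abs_sub_le_abs_sub_of_le_abs_deriv hg hs hderiv hx.1 hy.1
    _ ≤ |g x| + |g y| := abs_sub _ _
    _ ≤ 2 * δ := by linarith [hx.2, hy.2]

theorem quasilinearOn_of_deriv_ne_zero (hg : Differentiable ℝ g) (hs : s.OrdConnected)
    (hderiv : ∀ t ∈ s, deriv g t ≠ 0) : QuasilinearOn ℝ s g := by
  by_cases hpos : ∀ t ∈ s, 0 < deriv g t
  · exact (strictMonoOn_of_deriv_pos hs.convex hg.continuous.continuousOn
      fun t ht => hpos t (interior_subset ht)).monotoneOn.quasilinearOn hs.convex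
  obtain ⟨a, ha, ha0⟩ : ∃ a ∈ s, deriv g a ≤ 0 := by simpa using hpos
  have hneg : ∀ t ∈ s, deriv g t < 0 := by
    intro t ht
    by_contra! ht0
    -- Darboux: the derivative takes every value between `deriv g a ≤ 0` and `deriv g t ≥ 0`.
    obtain ⟨ξ, hξ, hξ0⟩ := (hs.image_deriv fun x _ => hg x).uIcc_subset
      (mem_image_of_mem _ ha) (mem_image_of_mem _ ht) (mem_uIcc.2 (Or.inl ⟨ha0, ht0⟩))
    exact hderiv ξ hξ hξ0
  exact (strictAntiOn_of_deriv_neg hs.convex hg.continuous.continuousOn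
    fun t ht => hneg t (interior_subset ht)).antitoneOn.quasilinearOn hs.convex

theorem volume_sublevel_le_of_le_abs_deriv_of_forall_ordConnected {F : ℝ → ℝ} {η b : ℝ}
    (hF : Differentiable ℝ F) (hs : s.OrdConnected) (hc : 0 < c)
    (hF' : ∀ t ∈ s, c ≤ |deriv F t|)
    (hpiece : ∀ s' ⊆ s, s'.OrdConnected → (∀ t ∈ s', η ≤ |F t|) →
      volume {t ∈ s' | |g t| ≤ δ} ≤ ENNReal.ofReal b) :
    volume {t ∈ s | |g t| ≤ δ} ≤ ENNReal.ofReal (2 * η / c) + 2 * ENNReal.ofReal b := by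
  have hFq : QuasilinearOn ℝ s F :=
    quasilinearOn_of_deriv_ne_zero hF hs fun t ht => abs_pos.1 (hc.trans_le (hF' t ht))
  have hcover : {t ∈ s | |g t| ≤ δ} ⊆ {t ∈ s | |F t| ≤ η} ∪
      {t ∈ {t ∈ s | η ≤ F t} | |g t| ≤ δ} ∪
      {t ∈ {t ∈ s | F t ≤ -η} | |g t| ≤ δ} := by
    rintro t ⟨hts, hgt⟩
    by_cases hFt : |F t| ≤ η
    · exact Or.inl (Or.inl ⟨hts, hFt⟩)
    · rcases lt_abs.1 (not_le.1 hFt) with h | h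
      · exact Or.inl (Or.inr ⟨⟨hts, h.le⟩, hgt⟩)
      · exact Or.inr ⟨⟨hts, by linarith⟩, hgt⟩
  have hup := hpiece _ (sep_subset _ _) (hFq.2 η).ordConnected fun t ht =>
    ht.2.trans (le_abs_self _)
  have hdown := hpiece _ (sep_subset _ _) (hFq.1 (-η)).ordConnected fun t ht =>
    (le_neg.1 ht.2).trans (neg_le_abs _)
  calc volume {t ∈ s | |g t| ≤ δ}
      ≤ ENNReal.ofReal (2 * η / c) + ENNReal.ofReal b + ENNReal.ofReal b :=
        (measure_mono hcover).trans <| (measure_union_le _ _).trans <| add_le_add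
          ((measure_union_le _ _).trans (add_le_add
            (volume_sublevel_le_of_le_abs_deriv hF hs hc hF') hup)) hdown
    _ = ENNReal.ofReal (2 * η / c) + 2 * ENNReal.ofReal b := by rw [add_assoc, ← two_mul]

theorem two_mul_sqrt_add_le_rpow {ρ : ℝ} (hρ : 0 < ρ) (hρ1 : ρ ≤ 1) (k : ℕ) :
    2 * √ρ + 2 * (3 ^ (k + 1) * √ρ ^ ((2:ℝ)⁻¹ ^ k)) ≤
      3 ^ (k + 1 + 1) * ρ ^ ((2:ℝ)⁻¹ ^ (k + 1)) := by
  have hsqrt : √ρ ^ ((2:ℝ)⁻¹ ^ k) = ρ ^ ((2:ℝ)⁻¹ ^ (k + 1)) := by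
    rw [Real.sqrt_eq_rpow, ← Real.rpow_mul hρ.le, pow_succ, mul_comm]
    norm_num
  have hle : √ρ ≤ √ρ ^ ((2:ℝ)⁻¹ ^ k) := by
    simpa using Real.rpow_le_rpow_of_exponent_ge (Real.sqrt_pos.2 hρ)
      (Real.sqrt_le_one.2 hρ1) (pow_le_one₀ (by norm_num : (0:ℝ) ≤ 2⁻¹) (by norm_num))
  have h3 : (3:ℝ) ≤ 3 ^ (k + 1) := le_self_pow₀ (by norm_num) (by omega)
  have hx : 0 ≤ √ρ ^ ((2:ℝ)⁻¹ ^ k) := by positivity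
  rw [← hsqrt, pow_succ 3 (k + 1)]
  nlinarith [mul_le_mul_of_nonneg_right h3 hx]

theorem volume_sublevel_le_of_le_abs_iteratedDeriv (k : ℕ) (hg : ContDiff ℝ (k + 1) g)
    (hs : s.OrdConnected) (hδ : 0 < δ) (hδc : δ ≤ c)
    (hderiv : ∀ t ∈ s, c ≤ |iteratedDeriv (k + 1) g t|) :
    volume {t ∈ s | |g t| ≤ δ} ≤
      ENNReal.ofReal (3 ^ (k + 1) * (δ / c) ^ ((2:ℝ)⁻¹ ^ k)) := by
  have hc : 0 < c := hδ.trans_le hδc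
  induction k generalizing s c δ with
  | zero =>
    refine (volume_sublevel_le_of_le_abs_deriv (hg.differentiable (by simp)) hs hc
      (by simpa only [zero_add, iteratedDeriv_one] using hderiv)).trans
      (ENNReal.ofReal_le_ofReal ?_)
    rw [pow_zero, Real.rpow_one, mul_div_assoc]
    gcongr
    norm_num
  | succ k ih =>
    have hF : Differentiable ℝ (iteratedDeriv (k + 1) g) :=
      hg.differentiable_iteratedDeriv _ (by norm_cast; omega)
    have hF' : ∀ t ∈ s, c ≤ |deriv (iteratedDeriv (k + 1) g) t| := by
      rwa [iteratedDeriv_succ] at hderiv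
    set ρ := δ / c
    have hρ : 0 < ρ := div_pos hδ hc
    have hρ1 : ρ ≤ 1 := (div_le_one hc).2 hδc
    -- Split at the level `η = √(δ c)`, which balances the two contributions.
    set η := c * √ρ
    have hη : 0 < η := mul_pos hc (Real.sqrt_pos.2 hρ)
    have hδη : δ / η = √ρ := by
      rw [div_eq_iff hη.ne', mul_left_comm, Real.mul_self_sqrt hρ.le,
        mul_div_cancel₀ _ hc.ne']
    have hδη' : δ ≤ η := by
      rw [← div_le_one hη, hδη]
      exact Real.sqrt_le_one.2 hρ1
    have hsplit := volume_sublevel_le_of_le_abs_deriv_of_forall_ordConnected hF hs hc hF'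
      fun s' _ hs' hFs' => ih (hg.of_le (by norm_cast; omega)) hs' hδ hδη' hFs' hη
    rw [hδη, mul_div_assoc, mul_div_cancel_left₀ _ hc.ne', ← ENNReal.ofReal_ofNat 2,
      ← ENNReal.ofReal_mul zero_le_two, ← ENNReal.ofReal_add (by positivity) (by positivity)]
      at hsplit
    exact hsplit.trans (ENNReal.ofReal_le_ofReal (two_mul_sqrt_add_le_rpow hρ hρ1 k))

theorem volume_sublevel_le_of_finset_cover {n : ℕ} {A : Set ℝ} {J : Finset (Set ℝ)}
    (hg : ContDiff ℝ (n + 1) g) (hA : A ⊆ ⋃ j ∈ J, j)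
    (hJ : ∀ j ∈ J, j.OrdConnected ∧ ∃ k ≤ n, ∀ t ∈ j, c ≤ |iteratedDeriv (k + 1) g t|)
    (hδ : 0 < δ) (hδc : δ ≤ c) :
    volume {t ∈ A | |g t| ≤ δ} ≤
      ENNReal.ofReal (J.card * (3 ^ (n + 1) * (δ / c) ^ ((2:ℝ)⁻¹ ^ n))) := by
  have hpiece : ∀ j ∈ J, volume {t ∈ j | |g t| ≤ δ} ≤
      ENNReal.ofReal (3 ^ (n + 1) * (δ / c) ^ ((2:ℝ)⁻¹ ^ n)) := by
    intro j hj
    obtain ⟨hjc, k, hkn, hk⟩ := hJ j hj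
    refine (volume_sublevel_le_of_le_abs_iteratedDeriv k (hg.of_le (by norm_cast; omega))
      hjc hδ hδc hk).trans (ENNReal.ofReal_le_ofReal ?_)
    have hc : 0 < c := hδ.trans_le hδc
    exact mul_le_mul (pow_le_pow_right₀ (by norm_num) (by omega))
      (Real.rpow_le_rpow_of_exponent_ge (div_pos hδ hc) ((div_le_one hc).2 hδc)
        (pow_le_pow_of_le_one (by norm_num) (by norm_num) hkn)) (by positivity) (by positivity)
  calc volume {t ∈ A | |g t| ≤ δ} ≤ volume (⋃ j ∈ J, {t ∈ j | |g t| ≤ δ}) := by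
        refine measure_mono fun t ⟨htA, ht⟩ => ?_
        obtain ⟨j, hj, htj⟩ := mem_iUnion₂.1 (hA htA)
        exact mem_iUnion₂.2 ⟨j, hj, htj, ht⟩
    _ ≤ ∑ j ∈ J, volume {t ∈ j | |g t| ≤ δ} := measure_biUnion_finset_le _ _
    _ ≤ ∑ _j ∈ J, ENNReal.ofReal (3 ^ (n + 1) * (δ / c) ^ ((2:ℝ)⁻¹ ^ n)) :=
        Finset.sum_le_sum hpiece
    _ = ENNReal.ofReal (J.card * (3 ^ (n + 1) * (δ / c) ^ ((2:ℝ)⁻¹ ^ n))) := by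
        rw [Finset.sum_const, nsmul_eq_mul, ENNReal.ofReal_mul (Nat.cast_nonneg _),
          ENNReal.ofReal_natCast]

end Sublevel

theorem exists_nhds_ball_le_abs {X Y : Type*} [TopologicalSpace X] [PseudoMetricSpace Y]
    {φ : X × Y → ℝ} {x₀ : X} {y₀ : Y} (hφ : ContinuousAt φ (x₀, y₀)) (h : φ (x₀, y₀) ≠ 0) :
    ∃ c > 0, ∃ U ∈ 𝓝 x₀, ∃ ε > 0, ∀ x ∈ U, ∀ y ∈ Metric.ball y₀ ε, c ≤ |φ (x, y)| := by
  have hev : ∀ᶠ z in 𝓝 (x₀, y₀), |φ (x₀, y₀)| / 2 ≤ |φ z| :=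
    hφ.abs.eventually (eventually_ge_nhds (half_lt_self (abs_pos.2 h)))
  obtain ⟨U, hU, V, hV, hUV⟩ := mem_nhds_prod_iff.1 hev
  obtain ⟨ε, hε, hball⟩ := Metric.mem_nhds_iff.1 hV
  exact ⟨_, half_pos (abs_pos.2 h), U, hU, ε, hε, fun x hx y hy => hUV ⟨hx, hball hy⟩⟩

section Compact

variable {X : Type*} [TopologicalSpace X] {K : Set X} {f : X → ℝ → ℝ}

theorem IsCompact.exists_finset_cover_le_abs_iteratedDeriv {L : Set ℝ} (hK : IsCompact K)
    (hL : IsCompact L)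
    (hcont : ∀ k, Continuous fun z : X × ℝ => iteratedDeriv (k + 1) (f z.1) z.2)
    (hnd : ∀ x ∈ K, ∀ t ∈ L, ∃ k, iteratedDeriv (k + 1) (f x) t ≠ 0) :
    ∃ n N : ℕ, ∃ c > 0, ∀ x ∈ K, ∃ J : Finset (Set ℝ), J.card ≤ N ∧ L ⊆ ⋃ j ∈ J, j ∧
      ∀ j ∈ J, j.OrdConnected ∧ ∃ k ≤ n, ∀ t ∈ j, c ≤ |iteratedDeriv (k + 1) (f x) t| := by
  have hloc : ∀ z ∈ K ×ˢ L, ∃ k : ℕ, ∃ c > 0, ∃ U ∈ 𝓝 z.1, ∃ ε > 0,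
      ∀ x ∈ U, ∀ t ∈ Metric.ball z.2 ε, c ≤ |iteratedDeriv (k + 1) (f x) t| := by
    rintro ⟨x, t⟩ ⟨hx, ht⟩
    obtain ⟨k, hk⟩ := hnd x hx t ht
    exact ⟨k, exists_nhds_ball_le_abs (hcont k).continuousAt hk⟩
  choose k c hc U hU ε hε hbound using hloc
  obtain ⟨T, hT⟩ := (hK.prod hL).elim_nhds_subcover'
    (fun z hz => U z hz ×ˢ Metric.ball z.2 (ε z hz))
    fun z hz => prod_mem_nhds (hU z hz) (Metric.ball_mem_nhds _ (hε z hz))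
  obtain ⟨c₀, hc₀T, hc₀⟩ : ∃ c₀, (∀ i ∈ T, c₀ ≤ c i.1 i.2) ∧ 0 < c₀ :=
    (((eventually_all_finset T).2 fun i _ => eventually_le_nhds (hc i.1 i.2)).filter_mono
      nhdsWithin_le_nhds |>.and self_mem_nhdsWithin).exists (f := 𝓝[>] (0:ℝ))
  refine ⟨T.sup fun i => k i.1 i.2, T.card, c₀, hc₀, fun x hx => ?_⟩
  classical
  refine ⟨(T.filter fun i => x ∈ U i.1 i.2).image fun i => Metric.ball i.1.2 (ε i.1 i.2),
    Finset.card_image_le.trans (Finset.card_filter_le _ _), fun t ht => ?_, ?_⟩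
  · obtain ⟨i, hiT, hi⟩ := mem_iUnion₂.1 (hT (mk_mem_prod hx ht))
    exact mem_iUnion₂.2
      ⟨_, Finset.mem_image_of_mem _ (Finset.mem_filter.2 ⟨hiT, hi.1⟩), hi.2⟩
  · simp only [Finset.mem_image, Finset.mem_filter]
    rintro _ ⟨i, ⟨hiT, hxi⟩, rfl⟩
    exact ⟨(convex_ball _ _).ordConnected, k i.1 i.2,
      Finset.le_sup (f := fun i => k i.1 i.2) hiT,
      fun t ht => (hc₀T i hiT).trans (hbound _ _ x hxi t ht)⟩

theorem IsCompact.exists_volume_sublevel_le (hK : IsCompact K) (hf : ∀ x, ContDiff ℝ ∞ (f x))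
    (hcont : ∀ k, Continuous fun z : X × ℝ => iteratedDeriv (k + 1) (f z.1) z.2)
    (hnd : ∀ x ∈ K, ∀ t ∈ Icc (0:ℝ) 1, ∃ k, iteratedDeriv (k + 1) (f x) t ≠ 0) :
    ∃ C > (0:ℝ), ∃ α > (0:ℝ), ∀ x ∈ K, ∀ E δ : ℝ, 0 < δ →
      volume {t ∈ Icc (0:ℝ) 1 | |f x t - E| ≤ δ} ≤ ENNReal.ofReal (C * δ ^ α) := by
  obtain ⟨n, N, c, hc, hcover⟩ :=
    hK.exists_finset_cover_le_abs_iteratedDeriv isCompact_Icc hcont hnd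
  set α : ℝ := 2⁻¹ ^ n
  refine ⟨(N * 3 ^ (n + 1) + 1) / c ^ α, by positivity, α, by positivity,
    fun x hx E δ hδ => ?_⟩
  obtain ⟨J, hJN, hL, hJ⟩ := hcover x hx
  have hρ : 0 ≤ (δ / c) ^ α := by positivity
  calc volume {t ∈ Icc (0:ℝ) 1 | |f x t - E| ≤ δ}
      ≤ ENNReal.ofReal (N * (3 ^ (n + 1) * (δ / c) ^ α) + (δ / c) ^ α) := ?_
    _ = ENNReal.ofReal ((N * 3 ^ (n + 1) + 1) / c ^ α * δ ^ α) := by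
        rw [Real.div_rpow hδ.le hc.le]
        ring_nf
  rcases le_or_gt δ c with hδc | hcδ
  · refine (volume_sublevel_le_of_finset_cover (g := fun t => f x t - E)
      ((hf x).sub contDiff_const |>.of_le (by exact_mod_cast le_top)) hL
      (by simpa only [iteratedDeriv_succ_sub_const] using hJ) hδ hδc).trans
      (ENNReal.ofReal_le_ofReal ?_)
    have hJN' : (J.card : ℝ) ≤ N := by exact_mod_cast hJN
    exact le_add_of_le_of_nonneg (mul_le_mul_of_nonneg_right hJN' (by positivity)) hρ
  · calc volume {t ∈ Icc (0:ℝ) 1 | |f x t - E| ≤ δ} ≤ volume (Icc (0:ℝ) 1) :=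
          measure_mono fun t ht => ht.1
      _ = ENNReal.ofReal 1 := by simp
      _ ≤ _ := by
          refine ENNReal.ofReal_le_ofReal ?_
          exact le_add_of_nonneg_of_le (by positivity)
            (Real.one_le_rpow ((one_le_div hc).2 hcδ.le) (by positivity))

end Compact

theorem AnalyticOnNhd.eq_of_iteratedDeriv_succ_eq_zero {E : Type*} [NormedAddCommGroup E]
    [NormedSpace ℝ E] [CompleteSpace E] {g : ℝ → E} (hg : AnalyticOnNhd ℝ g univ) {t₀ : ℝ}
    (h : ∀ k, iteratedDeriv (k + 1) g t₀ = 0) (t : ℝ) : g t = g t₀ := by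
  have horder : analyticOrderAt (g · - g t₀) t₀ = ⊤ := by
    refine ENat.eq_top_iff_forall_ge.2 fun n =>
      (natCast_le_analyticOrderAt_iff_iteratedDeriv_eq_zero
        ((hg t₀ trivial).fun_sub analyticAt_const)).2 fun i _ => ?_
    cases i with
    | zero => simp
    | succ i => rw [iteratedDeriv_succ_sub_const, h]
  have hloc : g =ᶠ[𝓝 t₀] fun _ => g t₀ :=
    (analyticOrderAt_eq_top.1 horder).mono fun _ => sub_eq_zero.1
  exact congrFun (hg.eq_of_eventuallyEq analyticOnNhd_const hloc) t

section Line

variable {E F : Type*} [NormedAddCommGroup E] [NormedSpace ℝ E] [NormedAddCommGroup F]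
  [NormedSpace ℝ F] {w : E → F}

theorem hasDerivAt_iteratedFDeriv_line (hw : ContDiff ℝ ∞ w) (k : ℕ) (p u : E) (t : ℝ) :
    HasDerivAt (fun s => iteratedFDeriv ℝ k w (p + s • u) fun _ => u)
      (iteratedFDeriv ℝ (k + 1) w (p + t • u) fun _ => u) t := by
  have hline : HasDerivAt (fun s : ℝ => p + s • u) u t := by
    simpa using ((hasDerivAt_id t).smul_const u).const_add p
  have hD : HasFDerivAt (iteratedFDeriv ℝ k w) (fderiv ℝ (iteratedFDeriv ℝ k w) (p + t • u))
      (p + t • u) :=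
    (hw.differentiable_iteratedFDeriv (mod_cast WithTop.coe_lt_top _) _).hasFDerivAt
  refine ((ContinuousMultilinearMap.apply ℝ (fun _ : Fin k => E) F fun _ => u).hasFDerivAt
    |>.comp_hasDerivAt t (hD.comp_hasDerivAt t hline)).congr_deriv ?_
  rw [iteratedFDeriv_succ_apply_left]
  rfl

theorem iteratedDeriv_comp_line (hw : ContDiff ℝ ∞ w) (k : ℕ) (p u : E) :
    iteratedDeriv k (fun t : ℝ => w (p + t • u)) =
      fun t => iteratedFDeriv ℝ k w (p + t • u) fun _ => u := by
  induction k with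
  | zero => ext t; simp
  | succ k ih =>
    ext t
    rw [iteratedDeriv_succ, ih]
    exact (hasDerivAt_iteratedFDeriv_line hw k p u t).deriv

theorem continuous_iteratedDeriv_comp_line (hw : ContDiff ℝ ∞ w) (k : ℕ) :
    Continuous fun z : (E × E) × ℝ => iteratedDeriv k (fun t => w (z.1.1 + t • z.1.2)) z.2 := by
  simp only [iteratedDeriv_comp_line hw]
  have := hw.continuous_iteratedFDeriv (m := k) (mod_cast le_top)
  fun_prop

theorem exists_iteratedDeriv_line_ne_zero [CompleteSpace F] (hw : ∀ x, AnalyticAt ℝ w x)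
    {p u : E} (hnc : ∃ t s : ℝ, w (p + t • u) ≠ w (p + s • u)) (t₀ : ℝ) :
    ∃ k, iteratedDeriv (k + 1) (fun t => w (p + t • u)) t₀ ≠ 0 := by
  by_contra! h
  have hconst := AnalyticOnNhd.eq_of_iteratedDeriv_succ_eq_zero
    (fun t _ => (hw _).comp (by fun_prop)) h
  obtain ⟨t, s, hts⟩ := hnc
  exact hts ((hconst t).trans (hconst s).symm)

end Line

theorem apply_fract_add_of_periodic {β : Type*} {w : ℝ × ℝ → β}
    (hper1 : ∀ x : ℝ × ℝ, w (x.1 + 1, x.2) = w x)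
    (hper2 : ∀ x : ℝ × ℝ, w (x.1, x.2 + 1) = w x)
    (p v : ℝ × ℝ) : w ((Int.fract p.1, Int.fract p.2) + v) = w (p + v) := by
  set y := (Int.fract p.1, Int.fract p.2) + v
  have hy : p + v = (y.1 + ⌊p.1⌋ * 1, y.2 + ⌊p.2⌋ * 1) := by
    ext
    · simp only [y, Prod.fst_add, mul_one]
      linarith [Int.fract_add_floor p.1]
    · simp only [y, Prod.snd_add, mul_one]
      linarith [Int.fract_add_floor p.2]
  rw [hy]
  have h1 := Function.Periodic.int_mul (c := (1:ℝ)) (f := fun a => w (a, y.2))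
    (fun a => hper1 (a, y.2)) ⌊p.1⌋ y.1
  have h2 := Function.Periodic.int_mul (c := (1:ℝ)) (f := fun b => w (y.1 + ⌊p.1⌋ * 1, b))
    (fun b => hper2 (_, b)) ⌊p.2⌋ y.2
  exact (h2.trans h1).symm

theorem isCompact_setOf_sq_add_sq_eq_one : IsCompact {u : ℝ × ℝ | u.1 ^ 2 + u.2 ^ 2 = 1} := by
  refine Metric.isCompact_of_isClosed_isBounded (isClosed_eq (by fun_prop) continuous_const)
    (Metric.isBounded_closedBall (x := 0) (r := 1) |>.subset fun u hu => ?_)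
  rw [mem_closedBall_zero_iff, Prod.norm_def, max_le_iff, Real.norm_eq_abs, Real.norm_eq_abs,
    ← sq_le_one_iff_abs_le_one, ← sq_le_one_iff_abs_le_one]
  constructor <;> nlinarith [sq_nonneg u.1, sq_nonneg u.2, hu.out]

/-- If `w : ℝ² → ℝ` is real analytic, `ℤ²`-periodic, and non-constant on every straight
line, then for every compact energy interval `[E₁,E₂]` there are `C, α > 0` such that for
every unit line segment `L`, every `E ∈ [E₁,E₂]` and every `δ > 0`, the 1D measure of
`{x ∈ L : |w x - E| ≤ δ}` is at most `C δ^α`. -/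
theorem stmt_8 (w : ℝ × ℝ → ℝ)
    (han : ∀ x : ℝ × ℝ, AnalyticAt ℝ w x)
    (hper1 : ∀ x : ℝ × ℝ, w (x.1 + 1, x.2) = w x)
    (hper2 : ∀ x : ℝ × ℝ, w (x.1, x.2 + 1) = w x)
    (hnc : ∀ p u : ℝ × ℝ, u ≠ 0 → ∃ t s : ℝ, w (p + t • u) ≠ w (p + s • u))
    (E₁ E₂ : ℝ) :
    ∃ C > (0:ℝ), ∃ α > (0:ℝ), ∀ p q : ℝ × ℝ,
      Real.sqrt ((p.1 - q.1) ^ 2 + (p.2 - q.2) ^ 2) = 1 →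
      ∀ E ∈ Set.Icc E₁ E₂, ∀ δ > (0:ℝ),
      MeasureTheory.volume {t : ℝ | t ∈ Set.Icc (0:ℝ) 1 ∧ |w (p + t • (q - p)) - E| ≤ δ}
        ≤ ENNReal.ofReal (C * δ ^ α) := by
  have hw : ContDiff ℝ ∞ w := contDiff_iff_contDiffAt.2 fun x => (han x).contDiffAt
  obtain ⟨C, hC, α, hα, hbound⟩ :=
    (isCompact_Icc (a := (0 : ℝ × ℝ)) (b := 1)).prod isCompact_setOf_sq_add_sq_eq_one
      |>.exists_volume_sublevel_le (f := fun x t => w (x.1 + t • x.2))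
        (fun x => hw.comp (by fun_prop))
        (fun k => continuous_iteratedDeriv_comp_line hw (k + 1))
        fun x hx t _ => exists_iteratedDeriv_line_ne_zero han
          (hnc _ _ fun hu => by simpa [hu] using hx.2.out) t
  refine ⟨C, hC, α, hα, fun p q hpq E _ δ hδ => ?_⟩
  have hmem : ((Int.fract p.1, Int.fract p.2), q - p) ∈
      Icc (0 : ℝ × ℝ) 1 ×ˢ {u : ℝ × ℝ | u.1 ^ 2 + u.2 ^ 2 = 1} := by
    refine ⟨⟨⟨Int.fract_nonneg _, Int.fract_nonneg _⟩, (Int.fract_lt_one _).le,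
      (Int.fract_lt_one _).le⟩, ?_⟩
    show (q - p).1 ^ 2 + (q - p).2 ^ 2 = 1
    rw [← Real.sqrt_eq_one.1 hpq, Prod.fst_sub, Prod.snd_sub]
    ring
  simpa only [apply_fract_add_of_periodic hper1 hper2] using hbound _ hmem E δ hδ
end
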